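/- Full case split for equations starting with two distinct variables: for distinct variables X, Y and words u, v over Σ ∪ Γ, the equation X·u = Y·v is satisfiable if and only if at least one of the following is satisfiable: (1) u[X ↦ Y] = v[X ↦ Y]; (2) (X'·u)[X ↦ Y·X'] = v[X ↦ Y·X'] for a fresh variable X'; (3) u[Y ↦ X·Y'] = (Y'·v)[Y ↦ X·Y'] for a fresh variable Y'. -/

import Mathlib

/-- Extension of a substitution `h : Γ → Σ*` to a monoid homomorphism on words over `Σ ∪ Γ`
that fixes letters of the alphabet. -/
def applySub {A V : Type} (h : V → List A) (u : List (A ⊕ V)) : List A :=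
  u.flatMap (Sum.elim (fun a => [a]) h)

/-- Homomorphic replacement `u[X ↦ w]` of the variable `X` by the word `w` in `u`. -/
def repl {A V : Type} [DecidableEq V] (X : V) (w : List (A ⊕ V)) (u : List (A ⊕ V)) :
    List (A ⊕ V) :=
  u.flatMap (Sum.elim (fun a => [Sum.inl a]) (fun Y => if Y = X then w else [Sum.inr Y]))

/-!
If `h` solves `X u = Y v`, then one of `h X`, `h Y` is a prefix of the other, say
`h X = h Y ++ t`. Sending the fresh variable `X'` to `t` solves the equation obtained by
substituting `Y X'` for `X` and cancelling the common prefix `Y`. Conversely, a solution of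
any of the three derived equations yields one of `X u = Y v` by substituting back. The case
`h Y = h X ++ t` is the mirror image, obtained by swapping the two sides.
-/

section WordEquations

variable {A V : Type}

def Satisfiable (e₁ e₂ : List (A ⊕ V)) : Prop :=
  ∃ h : V → List A, applySub h e₁ = applySub h e₂

theorem Satisfiable.symm {e₁ e₂ : List (A ⊕ V)} (hs : Satisfiable e₁ e₂) :
    Satisfiable e₂ e₁ :=
  let ⟨h, heq⟩ := hs
  ⟨h, heq.symm⟩

theorem Satisfiable.cons {e₁ e₂ : List (A ⊕ V)} (x : A ⊕ V) (hs : Satisfiable e₁ e₂) :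
    Satisfiable (x :: e₁) (x :: e₂) :=
  let ⟨h, heq⟩ := hs
  ⟨h, congrArg (_ ++ ·) heq⟩

@[simp]
theorem applySub_nil (h : V → List A) : applySub h [] = [] :=
  rfl

@[simp]
theorem applySub_cons_inr (h : V → List A) (Z : V) (u : List (A ⊕ V)) :
    applySub h (Sum.inr Z :: u) = h Z ++ applySub h u :=
  rfl

theorem applySub_congr {h g : V → List A} {u : List (A ⊕ V)}
    (hc : ∀ Z, Sum.inr Z ∈ u → h Z = g Z) : applySub h u = applySub g u := by
  refine List.flatMap_congr ?_
  rintro (a | Z) hZ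
  · rfl
  · exact hc Z hZ

theorem applySub_update_of_notMem [DecidableEq V] (h : V → List A) {Z : V} (a : List A)
    {u : List (A ⊕ V)} (hZ : Sum.inr Z ∉ u) :
    applySub (Function.update h Z a) u = applySub h u :=
  applySub_congr fun _ hW => Function.update_of_ne (by rintro rfl; exact hZ hW) _ _

theorem applySub_repl [DecidableEq V] (h : V → List A) (X : V) (w u : List (A ⊕ V)) :
    applySub h (repl X w u) = applySub (Function.update h X (applySub h w)) u := by
  rw [applySub, repl, List.flatMap_assoc]
  refine List.flatMap_congr ?_
  rintro (a | Z) -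
  · rfl
  · by_cases hZ : Z = X
    · subst hZ; simp [applySub]
    · simp [hZ, applySub]

theorem applySub_repl_of_eq [DecidableEq V] {h : V → List A} {X : V} {w : List (A ⊕ V)}
    (hw : applySub h w = h X) (u : List (A ⊕ V)) :
    applySub h (repl X w u) = applySub h u := by
  rw [applySub_repl, hw, Function.update_eq_self]

theorem Satisfiable.of_repl [DecidableEq V] {X : V} {w e₁ e₂ : List (A ⊕ V)}
    (hs : Satisfiable (repl X w e₁) (repl X w e₂)) : Satisfiable e₁ e₂ :=
  let ⟨h, heq⟩ := hs
  ⟨_, by rwa [applySub_repl, applySub_repl] at heq⟩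

@[simp]
theorem repl_cons_inr_self [DecidableEq V] (X : V) (w u : List (A ⊕ V)) :
    repl X w (Sum.inr X :: u) = w ++ repl X w u := by
  simp [repl]

theorem repl_cons_inr_of_ne [DecidableEq V] {X Z : V} (hZX : Z ≠ X) (w u : List (A ⊕ V)) :
    repl X w (Sum.inr Z :: u) = Sum.inr Z :: repl X w u := by
  simp [repl, hZX]

theorem satisfiable_repl_cons_of_eq_append [DecidableEq V] {X Y X' : V}
    {u v : List (A ⊕ V)} (hX'X : X' ≠ X) (hX'Y : X' ≠ Y) (hX'u : Sum.inr X' ∉ u)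
    (hX'v : Sum.inr X' ∉ v) {h : V → List A} {t : List A} (hX : h X = h Y ++ t)
    (hv : applySub h v = t ++ applySub h u) :
    Satisfiable (repl X [Sum.inr Y, Sum.inr X'] (Sum.inr X' :: u))
      (repl X [Sum.inr Y, Sum.inr X'] v) := by
  set k := Function.update h X' t
  have hkX : applySub k [Sum.inr Y, Sum.inr X'] = k X := by
    simp [k, Function.update_of_ne hX'X.symm, Function.update_of_ne hX'Y.symm, hX]
  refine ⟨k, ?_⟩
  rw [applySub_repl_of_eq hkX, applySub_repl_of_eq hkX, applySub_cons_inr,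
    applySub_update_of_notMem h t hX'u, applySub_update_of_notMem h t hX'v, hv]
  simp [k]

end WordEquations

/-- Full case split for equations starting with two distinct variables. -/
theorem stmt_8 {A V : Type} [DecidableEq V] (X Y X' Y' : V) (u v : List (A ⊕ V))
    (hXY : X ≠ Y)
    (hX'X : X' ≠ X) (hX'Y : X' ≠ Y) (hX'u : Sum.inr X' ∉ u) (hX'v : Sum.inr X' ∉ v)
    (hY'X : Y' ≠ X) (hY'Y : Y' ≠ Y) (hY'u : Sum.inr Y' ∉ u) (hY'v : Sum.inr Y' ∉ v) :
    (∃ h : V → List A, applySub h (Sum.inr X :: u) = applySub h (Sum.inr Y :: v)) ↔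
      ((∃ h : V → List A,
          applySub h (repl X [Sum.inr Y] u) = applySub h (repl X [Sum.inr Y] v)) ∨
       (∃ h : V → List A,
          applySub h (repl X [Sum.inr Y, Sum.inr X'] (Sum.inr X' :: u)) =
            applySub h (repl X [Sum.inr Y, Sum.inr X'] v)) ∨
       (∃ h : V → List A,
          applySub h (repl Y [Sum.inr X, Sum.inr Y'] u) =
            applySub h (repl Y [Sum.inr X, Sum.inr Y'] (Sum.inr Y' :: v)))) := by
  constructor
  · rintro ⟨h, heq⟩
    rw [applySub_cons_inr, applySub_cons_inr] at heq
    rcases List.append_eq_append_iff.mp heq with ⟨t, hY, hu⟩ | ⟨t, hX, hv⟩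
    · exact Or.inr <| Or.inr <|
        (satisfiable_repl_cons_of_eq_append hY'Y hY'X hY'v hY'u hY hu).symm
    · exact Or.inr <| Or.inl <| satisfiable_repl_cons_of_eq_append hX'X hX'Y hX'u hX'v hX hv
  · rintro (hs | hs | hs)
    · refine Satisfiable.of_repl (X := X) (w := [Sum.inr Y]) ?_
      rw [repl_cons_inr_self, repl_cons_inr_of_ne hXY.symm]
      exact Satisfiable.cons _ hs
    · refine Satisfiable.of_repl (X := X) (w := [Sum.inr Y, Sum.inr X']) ?_
      rw [repl_cons_inr_of_ne hX'X] at hs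
      rw [repl_cons_inr_self, repl_cons_inr_of_ne hXY.symm]
      exact Satisfiable.cons _ hs
    · refine (Satisfiable.of_repl (X := Y) (w := [Sum.inr X, Sum.inr Y']) ?_).symm
      rw [repl_cons_inr_of_ne hY'Y] at hs
      rw [repl_cons_inr_self, repl_cons_inr_of_ne hXY]
      exact Satisfiable.cons _ (Satisfiable.symm hs)
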